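/- arXiv:2507.15331 — 7 statements merged into one kernel-verified Lean document; each statement's English description precedes it below -/
import Mathlib

section
/- If Y is an n×n matrix (over a field) all of whose row sums and column sums are zero, then all first cofactors of Y are equal: for all indices j, k, p, q, (-1)^{j+k} det(Y with row j and column k deleted) = (-1)^{p+q} det(Y with row p and column q deleted). -/
/-- The `(j,k)` first cofactor of a square matrix: `(-1)^(j+k)` times the determinant of
the matrix obtained by deleting row `j` and column `k`. -/
def cof1 {n : ℕ} {F : Type*} [CommRing F] (Y : Matrix (Fin (n + 1)) (Fin (n + 1)) F)
    (j k : Fin (n + 1)) : F :=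
  (-1 : F) ^ (j.val + k.val) * (Y.submatrix j.succAbove k.succAbove).det

/-!
The cofactors of `Y` are the entries of its adjugate, and `adjugate Y i j` is the determinant of
`Y` with row `j` replaced by the `i`-th unit vector. Since this is linear in the new row,
`adjugate Y i j - adjugate Y i' j` is the determinant of `Y` with row `j` replaced by
`e i - e i'`. That matrix still has all row sums zero, so the all-ones vector lies in its kernel
and its determinant vanishes. Column sums are handled by transposing.
-/

namespace Matrix

variable {ι R : Type*} [Fintype ι] [DecidableEq ι] [CommRing R]

theorem det_eq_zero_of_row_sum_eq_zero [Nonempty ι] {A : Matrix ι ι R}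
    (h : ∀ i, ∑ j, A i j = 0) : A.det = 0 := by
  have hker : A *ᵥ 1 = 0 := funext fun i => by simpa [mulVec, dotProduct] using h i
  exact det_eq_zero_of_mulVec_eq_zero_of_mem_nonZeroDivisors hker
    (i := Classical.arbitrary ι) (one_mem _)

theorem adjugate_apply_eq_of_row_sum_eq_zero {A : Matrix ι ι R} (h : ∀ i, ∑ j, A i j = 0)
    (i i' j : ι) : adjugate A i j = adjugate A i' j := by
  have : Nonempty ι := ⟨j⟩
  have hdiff : (A.updateRow j (Pi.single i 1 - Pi.single i' 1)).det = 0 := by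
    refine det_eq_zero_of_row_sum_eq_zero fun l => ?_
    rcases eq_or_ne l j with rfl | hl
    · simp [Finset.sum_sub_distrib]
    · simpa [updateRow_ne hl] using h l
  rw [adjugate_apply, adjugate_apply, ← zero_add (A.updateRow j (Pi.single i' 1)).det, ← hdiff,
    ← det_updateRow_add, sub_add_cancel]

theorem adjugate_apply_eq_of_col_sum_eq_zero {A : Matrix ι ι R} (h : ∀ j, ∑ i, A i j = 0)
    (i j j' : ι) : adjugate A i j = adjugate A i j' := by
  simpa only [← adjugate_transpose, transpose_apply] using adjugate_apply_eq_of_row_sum_eq_zero (A := Aᵀ) h j j' i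

end Matrix

theorem cof1_eq_adjugate_apply {n : ℕ} {R : Type*} [CommRing R]
    (Y : Matrix (Fin (n + 1)) (Fin (n + 1)) R) (j k : Fin (n + 1)) :
    cof1 Y j k = Y.adjugate k j := by
  rw [cof1, Matrix.adjugate_fin_succ_eq_det_submatrix]

/-- If all row sums and all column sums of a square matrix over a field are zero,
then all its first cofactors are equal. -/
theorem all_first_cofactors_eq {F : Type*} [Field F] {n : ℕ}
    (Y : Matrix (Fin (n + 2)) (Fin (n + 2)) F)
    (hrow : ∀ i, ∑ j, Y i j = 0) (hcol : ∀ j, ∑ i, Y i j = 0)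
    (j k p q : Fin (n + 2)) :
    cof1 Y j k = cof1 Y p q := by
  rw [cof1_eq_adjugate_apply, cof1_eq_adjugate_apply,
    Matrix.adjugate_apply_eq_of_row_sum_eq_zero hrow k q,
    Matrix.adjugate_apply_eq_of_col_sum_eq_zero hcol q j p]
end

section
/- Second cofactors of a square matrix satisfy the transitivity identity C_{pq,jk}(Y) = C_{pr,jk}(Y) + C_{rq,jk}(Y) for all distinct indices p, q, r and column indices j ≠ k, whenever Y is a symmetric matrix with all row and column sums zero. -/
/-- Index of `p` in the minor obtained by deleting index `j` (for `p ≠ j`). -/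
def delIdx {n : ℕ} (j p : Fin (n + 2)) : Fin (n + 1) :=
  ⟨if j.val < p.val then p.val - 1 else min p.val n, by split <;> omega⟩

/-- The second cofactor `C_{ab,cd}(Y)`: rows `a, b` and columns `c, d` deleted, with the sign
`(-1)^(σ(a,b)+σ(c,d))`, realized recursively as `(-1)^(a+c)` times the first cofactor of the
`(a,c)` minor at the shifted indices; zero by convention when `a = b` or `c = d`. -/
def cof2 {n : ℕ} {F : Type*} [CommRing F] (Y : Matrix (Fin (n + 2)) (Fin (n + 2)) F)
    (a b c d : Fin (n + 2)) : F :=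
  if a = b ∨ c = d then 0 else
    (-1 : F) ^ (a.val + c.val) *
      cof1 (Y.submatrix a.succAbove c.succAbove) (delIdx a b) (delIdx c d)

/-!
Write `M` for `Y` with columns `j, k` deleted, an `(n + 2) × n` matrix whose columns sum to zero,
and `D(a, b)` for the signed minor of `M` without rows `a, b`, so that `C_{ab,jk} = ± D(a, b)` with
a sign depending only on `j, k`. For distinct `a, b, c` the square matrix
`[e_a - e_b | e_b - e_c | M]` still has zero column sums, hence is singular; Laplace expansion
along its first two columns turns this into `D(a, b) + D(b, c) + D(c, a) = 0`, which together with
`D(a, b) = -D(b, a)` is the transitivity identity.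
-/

open Matrix

lemma Fin.val_succAbove_eq_ite {m : ℕ} (p : Fin (m + 1)) (t : Fin m) :
    (p.succAbove t).val = if t.val < p.val then t.val else t.val + 1 := by
  rcases lt_or_ge t.castSucc p with h | h
  · rw [Fin.succAbove_of_castSucc_lt _ _ h, if_pos (show t.val < p.val from h)]; rfl
  · rw [Fin.succAbove_of_le_castSucc _ _ h, if_neg (show ¬t.val < p.val from not_lt.2 h)]; rfl

lemma val_delIdx {n : ℕ} (j p : Fin (n + 2)) :
    (delIdx j p).val = if j.val < p.val then p.val - 1 else min p.val n := rfl

lemma succAbove_eq_iff_eq_delIdx {n : ℕ} {a b : Fin (n + 2)} (h : a ≠ b) (t : Fin (n + 1)) :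
    a.succAbove t = b ↔ t = delIdx a b := by
  have := Fin.val_ne_of_ne h
  rw [Fin.ext_iff, Fin.ext_iff, Fin.val_succAbove_eq_ite, val_delIdx]
  split_ifs <;> omega

/-- The increasing enumeration of `Fin (n + 2) \ {a, b}`. -/
def skipPair {n : ℕ} (a b : Fin (n + 2)) : Fin n → Fin (n + 2) :=
  a.succAbove ∘ (delIdx a b).succAbove

lemma skipPair_comm {n : ℕ} {a b : Fin (n + 2)} (h : a ≠ b) : skipPair a b = skipPair b a := by
  have := Fin.val_ne_of_ne h
  funext i
  have := i.isLt
  apply Fin.ext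
  simp only [skipPair, Function.comp_apply, Fin.val_succAbove_eq_ite, val_delIdx]
  split_ifs <;> omega

/-- The sign `(-1) ^ σ(a, b)`: for `a ≠ b`, `a + delIdx a b` is exactly `σ(a, b)`. -/
def pairSign (R : Type*) [CommRing R] {n : ℕ} (a b : Fin (n + 2)) : R :=
  (-1) ^ (a.val + (delIdx a b).val)

lemma pairSign_swap {R : Type*} [CommRing R] {n : ℕ} {a b : Fin (n + 2)} (h : a ≠ b) :
    pairSign R a b = -pairSign R b a := by
  have := Fin.val_ne_of_ne h
  have key : a.val + (delIdx a b).val + 1 = b.val + (delIdx b a).val ∨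
      b.val + (delIdx b a).val + 1 = a.val + (delIdx a b).val := by
    simp only [val_delIdx]; split_ifs <;> omega
  rcases key with key | key <;> simp [pairSign, ← key, pow_succ]

lemma Matrix.det_eq_zero_of_sum_rows_eq_zero {R ι : Type*} [CommRing R] [Fintype ι]
    [DecidableEq ι] [Nonempty ι] (A : Matrix ι ι R) (h : ∀ j, ∑ i, A i j = 0) : A.det = 0 := by
  let i₀ : ι := Classical.arbitrary ι
  have hsum : ∑ i, A i = 0 := funext fun j ↦ (Finset.sum_apply j _ fun i ↦ A i).trans (h j)
  have := det_updateRow_sum A i₀ fun _ ↦ (1 : R)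
  simp only [one_smul, hsum] at this
  rw [← this]
  exact det_eq_zero_of_row_eq_zero i₀ fun j ↦ by simp

lemma Matrix.det_of_cons {R : Type*} [CommRing R] {m : ℕ} (x : Fin (m + 1) → R)
    (N : Matrix (Fin (m + 1)) (Fin m) R) :
    (of fun i ↦ Fin.cons (x i) (N i) : Matrix (Fin (m + 1)) (Fin (m + 1)) R).det =
      ∑ i : Fin (m + 1), (-1) ^ (i : ℕ) * x i * (N.submatrix i.succAbove id).det :=
  det_succ_column_zero _

section PairMinor

variable {R : Type*} [CommRing R] {n : ℕ}

def pairMinor (M : Matrix (Fin (n + 2)) (Fin n) R) (a b : Fin (n + 2)) : R :=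
  pairSign R a b * (M.submatrix (skipPair a b) id).det

lemma pairMinor_swap (M : Matrix (Fin (n + 2)) (Fin n) R) {a b : Fin (n + 2)} (h : a ≠ b) :
    pairMinor M a b = -pairMinor M b a := by
  rw [pairMinor, pairMinor, skipPair_comm h, pairSign_swap h, neg_mul]

lemma single_succAbove_of_ne {a b : Fin (n + 2)} (h : a ≠ b) (t : Fin (n + 1)) :
    (Pi.single b 1 : Fin (n + 2) → R) (a.succAbove t) =
      (Pi.single (delIdx a b) 1 : Fin (n + 1) → R) t := by
  simp only [Pi.single_apply, succAbove_eq_iff_eq_delIdx h]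

lemma pairMinor_cycle (M : Matrix (Fin (n + 2)) (Fin n) R) (hM : ∀ j, ∑ i, M i j = 0)
    {a b c : Fin (n + 2)} (hab : a ≠ b) (hbc : b ≠ c) (hac : a ≠ c) :
    pairMinor M a b + pairMinor M b c + pairMinor M c a = 0 := by
  set u : Fin (n + 2) → R := Pi.single a 1 - Pi.single b 1
  set v : Fin (n + 2) → R := Pi.single b 1 - Pi.single c 1
  set N : Matrix (Fin (n + 2)) (Fin (n + 1)) R := of fun i ↦ Fin.cons (v i) (M i)
  have hsing : (of fun i ↦ Fin.cons (u i) (N i) : Matrix _ (Fin (n + 2)) R).det = 0 := by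
    refine det_eq_zero_of_sum_rows_eq_zero _ fun j ↦ ?_
    refine Fin.cases ?_ (fun j ↦ Fin.cases ?_ (fun j ↦ ?_) j) j
    · simp [u, Finset.sum_sub_distrib]
    · simp [N, v, Finset.sum_sub_distrib]
    · simpa [N] using hM j
  have hN : ∀ x : Fin (n + 2), N.submatrix x.succAbove id =
      of fun t ↦ Fin.cons (v (x.succAbove t)) ((M.submatrix x.succAbove id) t) := fun _ ↦ rfl
  simp only [det_of_cons, hN, u, Pi.sub_apply, Pi.single_apply, mul_sub, sub_mul, mul_ite, ite_mul,
    mul_one, mul_zero, zero_mul, submatrix_submatrix, CompTriple.comp_eq, Finset.sum_sub_distrib,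
    Finset.sum_ite_eq', Finset.mem_univ, if_true] at hsing
  simp only [v, Pi.sub_apply, single_succAbove_of_ne hab, single_succAbove_of_ne hac,
    single_succAbove_of_ne hbc, Pi.single_eq_of_ne (Fin.succAbove_ne _ _), Pi.single_apply,
    mul_sub, sub_mul, zero_sub, mul_neg, neg_mul, Finset.sum_sub_distrib, Finset.sum_neg_distrib,
    mul_ite, mul_one, mul_zero, ite_mul, zero_mul, Finset.sum_ite_eq', Finset.mem_univ, if_true]
    at hsing
  rw [pairMinor_swap M hac.symm]
  simp only [pairMinor, pairSign, skipPair, pow_add]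
  linear_combination hsing

lemma pairMinor_eq_add (M : Matrix (Fin (n + 2)) (Fin n) R) (hM : ∀ j, ∑ i, M i j = 0)
    {p q r : Fin (n + 2)} (hpq : p ≠ q) (hpr : p ≠ r) (hqr : q ≠ r) :
    pairMinor M p q = pairMinor M p r + pairMinor M r q := by
  linear_combination pairMinor_swap M hpq - pairMinor_cycle M hM hpr hqr.symm hpq

lemma cof2_eq_pairSign_mul_pairMinor (Y : Matrix (Fin (n + 2)) (Fin (n + 2)) R)
    {a b c d : Fin (n + 2)} (hab : a ≠ b) (hcd : c ≠ d) :
    cof2 Y a b c d = pairSign R c d * pairMinor (Y.submatrix id (skipPair c d)) a b := by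
  rw [cof2, if_neg (not_or.2 ⟨hab, hcd⟩), cof1, pairMinor, pairSign, pairSign,
    submatrix_submatrix, submatrix_submatrix]
  simp only [skipPair, Function.comp_id, Function.id_comp, pow_add]
  ring

end PairMinor

theorem cof2_transitive_general {n : ℕ} (Y : Matrix (Fin (n + 2)) (Fin (n + 2)) ℝ)
    (hcol : ∀ b, ∑ a, Y a b = 0)
    (p q r j k : Fin (n + 2)) (hpq : p ≠ q) (hpr : p ≠ r) (hqr : q ≠ r) (hjk : j ≠ k) :
    cof2 Y p q j k = cof2 Y p r j k + cof2 Y r q j k := by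
  rw [cof2_eq_pairSign_mul_pairMinor Y hpq hjk, cof2_eq_pairSign_mul_pairMinor Y hpr hjk,
    cof2_eq_pairSign_mul_pairMinor Y hqr.symm hjk,
    pairMinor_eq_add (Y.submatrix id (skipPair j k)) (fun i ↦ hcol (skipPair j k i)) hpq hpr hqr,
    mul_add]

/-- Transitivity of second cofactors: for a symmetric matrix with zero row and column sums,
`C_{pq,jk} = C_{pr,jk} + C_{rq,jk}` for distinct `p, q, r` and `j ≠ k`. -/
theorem cof2_transitive {n : ℕ} (Y : Matrix (Fin (n + 2)) (Fin (n + 2)) ℝ)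
    (hsym : ∀ a b, Y a b = Y b a)
    (hrow : ∀ a, ∑ b, Y a b = 0) (hcol : ∀ b, ∑ a, Y a b = 0)
    (p q r j k : Fin (n + 2)) (hpq : p ≠ q) (hpr : p ≠ r) (hqr : q ≠ r) (hjk : j ≠ k) :
    cof2 Y p q j k = cof2 Y p r j k + cof2 Y r q j k :=
  cof2_transitive_general Y hcol p q r j k hpq hpr hqr hjk
end

section
/- For a connected network with admittance matrix Y of rank n−1 and common cofactor value c(Y), the transfer impedances T_{pq,jk} = C_{pq,jk}(Y)/c(Y) satisfy the identity 2·T_{pq,jk} = Z_{pk} + Z_{qj} − Z_{pj} − Z_{qk}, where Z_{jk} = T_{jk,jk} is the driving-point impedance between nodes j and k. -/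
/-! Read `C_{pq,jk}(Y)` as the determinant of `Y` with rows `p, q` replaced by the unit rows
`e_j, e_k`. It is alternating in `(p, q)`, and since the rows of `Y` sum to zero it is additive:
`C_{pq,jk} = C_{pr,jk} + C_{rq,jk}`. Transposing gives the same in `(j, k)`, so grounding at a
node `0` yields `C_{pq,jk} = h(p,j) - h(p,k) - h(q,j) + h(q,k)` with `h(a,b) = C_{a0,b0}`, which
is symmetric when `Y` is. Substituting this into both sides turns the claim into a ring identity. -/

open Matrix

theorem Pi.single_comp_of_injective {l m α : Type*} [DecidableEq l] [DecidableEq m] [Zero α]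
    {f : l → m} (hf : Function.Injective f) (i : l) (x : α) :
    Pi.single (f i) x ∘ f = Pi.single i x :=
  Function.update_comp_eq_of_injective (0 : m → α) hf i x

theorem Matrix.submatrix_updateRow_of_injective {l m n o α : Type*} [DecidableEq l]
    [DecidableEq m] (A : Matrix m n α) {f : l → m} (hf : Function.Injective f) (g : o → n)
    (i : l) (v : n → α) :
    (A.updateRow (f i) v).submatrix f g = (A.submatrix f g).updateRow i (v ∘ g) := by
  ext i' j
  simp [updateRow_apply, hf.eq_iff]

section Determinant

variable {n R : Type*} [Fintype n] [DecidableEq n] [CommRing R]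

theorem Matrix.det_updateRow_updateRow_swap (M : Matrix n n R) {p q : n} (hpq : p ≠ q)
    (x y : n → R) :
    ((M.updateRow p x).updateRow q y).det = -((M.updateRow p y).updateRow q x).det := by
  have hswap : (M.updateRow p x).updateRow q y
      = ((M.updateRow p y).updateRow q x).submatrix (Equiv.swap p q) id := by
    ext i j
    rcases eq_or_ne i p with rfl | hip
    · simp [updateRow_apply, hpq]
    rcases eq_or_ne i q with rfl | hiq
    · simp [updateRow_apply, hpq]
    · simp [updateRow_apply, Equiv.swap_apply_of_ne_of_ne hip hiq, hip, hiq]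
  rw [hswap, det_permute, Equiv.Perm.sign_swap hpq]
  simp

theorem Matrix.sum_det_updateRow_eq_zero {A : Matrix n n R} (hA : ∑ i, A i = 0)
    (B : Matrix n n R) (q : n) : ∑ i, (B.updateRow q (A i)).det = 0 := by
  have h := (detRowAlternating : (n → R) [⋀^n]→ₗ[R] R).map_update_sum Finset.univ q A B
  rw [hA] at h
  exact h.symm.trans (AlternatingMap.map_update_zero _ _ _)

/-- Expanding row `q = -∑_{i ≠ q} A i` of the left-hand side, only the rows `i = p, r` survive. -/
theorem Matrix.det_updateRow_updateRow_eq_add {A : Matrix n n R} (hA : ∑ i, A i = 0)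
    {p q r : n} (hpq : p ≠ q) (hpr : p ≠ r) (hqr : q ≠ r) (u w : n → R) :
    ((A.updateRow p u).updateRow r w).det
      = ((A.updateRow q u).updateRow r w).det + ((A.updateRow p u).updateRow q w).det := by
  have hsum := sum_det_updateRow_eq_zero hA ((A.updateRow p u).updateRow r w) q
  have hvanish : ∀ i ∈ Finset.univ, i ∉ ({p, q, r} : Finset n) →
      (((A.updateRow p u).updateRow r w).updateRow q (A i)).det = 0 := by
    intro i _ hi
    simp only [Finset.mem_insert, Finset.mem_singleton, not_or] at hi
    exact det_zero_of_row_eq (Ne.symm hi.2.1) (by simp [hi.1, hi.2.1, hi.2.2])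
  have hp : (((A.updateRow p u).updateRow r w).updateRow q (A p)).det
      = -((A.updateRow q u).updateRow r w).det := by
    rw [updateRow_comm A hpr, det_updateRow_updateRow_swap _ hpq,
      ← updateRow_ne (M := A) (b := w) hpr, updateRow_eq_self, updateRow_comm A hqr.symm]
  have hq : (((A.updateRow p u).updateRow r w).updateRow q (A q)).det
      = ((A.updateRow p u).updateRow r w).det := by
    rw [show A q = ((A.updateRow p u).updateRow r w) q by simp [hpq.symm, hqr], updateRow_eq_self]
  have hr : (((A.updateRow p u).updateRow r w).updateRow q (A r)).det
      = -((A.updateRow p u).updateRow q w).det := by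
    rw [det_updateRow_updateRow_swap _ hqr.symm, ← updateRow_ne (M := A) (b := u) hpr.symm,
      updateRow_eq_self]
  rw [← Finset.sum_subset (Finset.subset_univ _) hvanish, Finset.sum_insert (by simp [hpq, hpr]),
    Finset.sum_pair hqr, hp, hq, hr] at hsum
  linear_combination hsum

end Determinant

section Cofactors

variable {n : ℕ} {F : Type*} [CommRing F]

theorem cof1_eq_adjugate (A : Matrix (Fin (n + 1)) (Fin (n + 1)) F) (i j : Fin (n + 1)) :
    cof1 A i j = adjugate A j i :=
  (adjugate_fin_succ_eq_det_submatrix A j i).symm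

theorem cof1_eq_det_updateRow (A : Matrix (Fin (n + 1)) (Fin (n + 1)) F) (i j : Fin (n + 1)) :
    cof1 A i j = (A.updateRow i (Pi.single j 1)).det := by
  rw [cof1_eq_adjugate, adjugate_apply]

theorem cof1_transpose (A : Matrix (Fin (n + 1)) (Fin (n + 1)) F) (i j : Fin (n + 1)) :
    cof1 Aᵀ i j = cof1 A j i := by
  rw [cof1_eq_adjugate, cof1_eq_adjugate, ← adjugate_transpose, transpose_apply]

theorem delIdx_succAbove (a : Fin (n + 2)) (i : Fin (n + 1)) : delIdx a (a.succAbove i) = i := by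
  have := i.isLt
  rcases lt_or_ge i.castSucc a with h | h
  · rw [Fin.succAbove_of_castSucc_lt _ _ h]
    rw [Fin.lt_def, Fin.val_castSucc] at h
    ext; simp only [delIdx, Fin.val_castSucc]; split_ifs <;> omega
  · rw [Fin.succAbove_of_le_castSucc _ _ h]
    rw [Fin.le_def, Fin.val_castSucc] at h
    ext; simp only [delIdx, Fin.val_succ]; split_ifs <;> omega

theorem cof2_eq_det_updateRow_updateRow (Y : Matrix (Fin (n + 2)) (Fin (n + 2)) F)
    {a b : Fin (n + 2)} (hab : a ≠ b) (c d : Fin (n + 2)) :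
    cof2 Y a b c d = ((Y.updateRow a (Pi.single c 1)).updateRow b (Pi.single d 1)).det := by
  rcases eq_or_ne c d with rfl | hcd
  · rw [cof2, if_pos (Or.inr rfl)]
    exact (det_zero_of_row_eq hab (by simp [hab])).symm
  obtain ⟨i, rfl⟩ := Fin.exists_succAbove_eq hab.symm
  obtain ⟨j, rfl⟩ := Fin.exists_succAbove_eq hcd.symm
  rw [cof2, if_neg (by tauto), delIdx_succAbove, delIdx_succAbove, cof1_eq_det_updateRow,
    ← Pi.single_comp_of_injective Fin.succAbove_right_injective,
    ← submatrix_updateRow_of_injective _ Fin.succAbove_right_injective, updateRow_comm _ hab,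
    ← cof1_eq_det_updateRow, cof1]

theorem cof2_transpose (Y : Matrix (Fin (n + 2)) (Fin (n + 2)) F) (a b c d : Fin (n + 2)) :
    cof2 Yᵀ c d a b = cof2 Y a b c d := by
  by_cases h : a = b ∨ c = d
  · rw [cof2, cof2, if_pos h, if_pos h.symm]
  · rw [cof2, cof2, if_neg h, if_neg (by tauto), add_comm, ← transpose_submatrix, cof1_transpose]

theorem cof2_self_left (Y : Matrix (Fin (n + 2)) (Fin (n + 2)) F) (p j k : Fin (n + 2)) :
    cof2 Y p p j k = 0 :=
  if_pos (Or.inl rfl)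

theorem cof2_swap_rows (Y : Matrix (Fin (n + 2)) (Fin (n + 2)) F) (p q j k : Fin (n + 2)) :
    cof2 Y q p j k = -cof2 Y p q j k := by
  rcases eq_or_ne p q with rfl | hpq
  · rw [cof2_self_left, neg_zero]
  rw [cof2_eq_det_updateRow_updateRow Y hpq.symm, cof2_eq_det_updateRow_updateRow Y hpq,
    updateRow_comm Y hpq.symm, det_updateRow_updateRow_swap Y hpq]

theorem cof2_swap_cols (Y : Matrix (Fin (n + 2)) (Fin (n + 2)) F) (p q j k : Fin (n + 2)) :
    cof2 Y p q k j = -cof2 Y p q j k := by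
  rw [← cof2_transpose Y p q k j, cof2_swap_rows, cof2_transpose]

theorem cof2_add_rows {Y : Matrix (Fin (n + 2)) (Fin (n + 2)) F} (hY : ∀ j, ∑ i, Y i j = 0)
    (p q j k r : Fin (n + 2)) : cof2 Y p q j k = cof2 Y p r j k + cof2 Y r q j k := by
  rcases eq_or_ne p r with rfl | hpr
  · rw [cof2_self_left, zero_add]
  rcases eq_or_ne r q with rfl | hrq
  · rw [cof2_self_left, add_zero]
  rcases eq_or_ne p q with rfl | hpq
  · rw [cof2_self_left, cof2_swap_rows Y p r, add_neg_cancel]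
  have hsum : ∑ i, Y i = 0 := funext fun j => (Finset.sum_apply j _ _).trans (hY j)
  rw [cof2_eq_det_updateRow_updateRow Y hpq, cof2_eq_det_updateRow_updateRow Y hpr,
    cof2_eq_det_updateRow_updateRow Y hrq, det_updateRow_updateRow_eq_add hsum hpr hpq hrq,
    add_comm]

theorem cof2_add_cols {Y : Matrix (Fin (n + 2)) (Fin (n + 2)) F} (hY : ∀ i, ∑ j, Y i j = 0)
    (p q j k r : Fin (n + 2)) : cof2 Y p q j k = cof2 Y p q j r + cof2 Y p q r k := by
  simp only [← cof2_transpose Y p q]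
  exact cof2_add_rows hY j k p q r

theorem cof2_eq_grounded {Y : Matrix (Fin (n + 2)) (Fin (n + 2)) F}
    (hrow : ∀ i, ∑ j, Y i j = 0) (hcol : ∀ j, ∑ i, Y i j = 0) (p q j k r : Fin (n + 2)) :
    cof2 Y p q j k
      = cof2 Y p r j r - cof2 Y p r k r - cof2 Y q r j r + cof2 Y q r k r := by
  rw [cof2_add_rows hcol p q j k r, cof2_swap_rows Y q r, cof2_add_cols hrow p r j k r,
    cof2_add_cols hrow q r j k r, cof2_swap_cols Y p r k r, cof2_swap_cols Y q r k r]
  ring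

theorem two_mul_cof2 {Y : Matrix (Fin (n + 2)) (Fin (n + 2)) F} (hY : Y.IsSymm)
    (hrow : ∀ i, ∑ j, Y i j = 0) (hcol : ∀ j, ∑ i, Y i j = 0) (p q j k : Fin (n + 2)) :
    2 * cof2 Y p q j k
      = cof2 Y p k p k + cof2 Y q j q j - cof2 Y p j p j - cof2 Y q k q k := by
  have hsymm (a b : Fin (n + 2)) : cof2 Y a 0 b 0 = cof2 Y b 0 a 0 := by
    rw [← cof2_transpose, hY]
  rw [cof2_eq_grounded hrow hcol p q j k 0, cof2_eq_grounded hrow hcol p k p k 0,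
    cof2_eq_grounded hrow hcol q j q j 0, cof2_eq_grounded hrow hcol p j p j 0,
    cof2_eq_grounded hrow hcol q k q k 0, hsymm k p, hsymm j q, hsymm j p, hsymm k q]
  ring

end Cofactors

theorem transfer_impedance_from_driving_point_general {n : ℕ}
    (Y : Matrix (Fin (n + 2)) (Fin (n + 2)) ℝ)
    (hsym : ∀ a b, Y a b = Y b a)
    (hrow : ∀ a, ∑ b, Y a b = 0) (hcol : ∀ b, ∑ a, Y a b = 0)
    (c : ℝ)
    (p q j k : Fin (n + 2)) :
    2 * (cof2 Y p q j k / c) =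
      cof2 Y p k p k / c + cof2 Y q j q j / c
        - cof2 Y p j p j / c - cof2 Y q k q k / c := by
  rw [mul_div_assoc', two_mul_cof2 (IsSymm.ext fun a b => hsym b a) hrow hcol]
  ring

/-- Transfer impedances `T_{pq,jk} = C_{pq,jk}(Y)/c(Y)` satisfy
`2 T_{pq,jk} = Z_{pk} + Z_{qj} - Z_{pj} - Z_{qk}`, where `Z_{jk} = C_{jk,jk}(Y)/c(Y)`
is the driving-point impedance. -/
theorem transfer_impedance_from_driving_point {n : ℕ}
    (Y : Matrix (Fin (n + 2)) (Fin (n + 2)) ℝ)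
    (hsym : ∀ a b, Y a b = Y b a)
    (hrow : ∀ a, ∑ b, Y a b = 0) (hcol : ∀ b, ∑ a, Y a b = 0)
    (hrank : Y.rank = n + 1)
    (c : ℝ) (hc : ∀ a b, cof1 Y a b = c) (hc0 : c ≠ 0)
    (p q j k : Fin (n + 2)) :
    2 * (cof2 Y p q j k / c) =
      cof2 Y p k p k / c + cof2 Y q j q j / c
        - cof2 Y p j p j / c - cof2 Y q k q k / c :=
  transfer_impedance_from_driving_point_general Y hsym hrow hcol c p q j k
end

section
/- (Foster's mean impedance theorem) In a connected network on n nodes with real positive branch admittances y_{jk} between node pairs and admittance matrix Y of rank n−1, the sum over all unordered node pairs {j,k} of y_{jk}·Z_{jk} equals n−1, where Z_{jk} is the driving-point impedance between j and k. -/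
/-- The weighted graph Laplacian (admittance matrix) of branch admittances `y`. -/
def lap {m : ℕ} (y : Fin m → Fin m → ℝ) : Matrix (Fin m) (Fin m) ℝ :=
  fun a b => if a = b then ∑ x, y a x else - y a b

/-!
Ground the network at a node `r`: padding the inverse of the principal minor `Y_r` with a zero
row and column at `r` gives a matrix `G_r` with `Y G_r = I - e_r 1ᵀ`. Expanding the cofactor
`C_{jk,jk}` through the adjugate of `Y_j` gives `Z_{jk} = (Y_j⁻¹)_{kk} = (e_j - e_k)ᵀ G_j (e_j - e_k)`.
Since the kernel of `Y` consists of the constants, this quadratic form takes the same value for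
every `G_r`, so with `G = G_0` and `Y = ∑_{j<k} y_{jk} (e_j - e_k)(e_j - e_k)ᵀ`,
`∑_{j<k} y_{jk} Z_{jk} = tr (Y G) = tr (I - e_0 1ᵀ)`, one less than the number of nodes.
-/

open Matrix

lemma succAbove_delIdx {n : ℕ} {j k : Fin (n + 2)} (h : j ≠ k) :
    j.succAbove (delIdx j k) = k := by
  have := Fin.val_ne_of_ne h
  ext
  simp only [Fin.succAbove, delIdx, Fin.lt_def, Fin.val_castSucc]
  split_ifs <;> simp_all <;> omega

section Cofactors

variable {R : Type*} [CommRing R] {n : ℕ}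

lemma cof1_self (Y : Matrix (Fin (n + 1)) (Fin (n + 1)) R) (j : Fin (n + 1)) :
    cof1 Y j j = (Y.submatrix j.succAbove j.succAbove).det := by
  rw [cof1, Even.neg_one_pow ⟨_, rfl⟩, one_mul]

lemma cof2_self_of_ne (Y : Matrix (Fin (n + 2)) (Fin (n + 2)) R) {j k : Fin (n + 2)}
    (hjk : j ≠ k) :
    cof2 Y j k j k = cof1 (Y.submatrix j.succAbove j.succAbove) (delIdx j k) (delIdx j k) := by
  rw [cof2, if_neg (by simp [hjk]), Even.neg_one_pow ⟨_, rfl⟩, one_mul]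

end Cofactors

namespace Matrix

variable {R : Type*} [CommRing R] {n : ℕ}

lemma det_submatrix_succAbove_self_eq_mul_inv (M : Matrix (Fin (n + 1)) (Fin (n + 1)) R)
    (hM : IsUnit M.det) (p : Fin (n + 1)) :
    (M.submatrix p.succAbove p.succAbove).det = M.det * M⁻¹ p p := by
  rw [inv_def, Matrix.smul_apply, adjugate_fin_succ_eq_det_submatrix, Even.neg_one_pow ⟨_, rfl⟩,
    smul_eq_mul, ← mul_assoc, Ring.mul_inverse_cancel _ hM, one_mul, one_mul]

lemma mulVec_succAbove_of_apply_eq_zero (Y : Matrix (Fin (n + 1)) (Fin (n + 1)) R)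
    {r : Fin (n + 1)} {u : Fin (n + 1) → R} (hu : u r = 0) (i : Fin n) :
    (Y *ᵥ u) (r.succAbove i) = (Y.submatrix r.succAbove r.succAbove *ᵥ (u ∘ r.succAbove)) i := by
  simp [mulVec, dotProduct, Fin.sum_univ_succAbove _ r, hu]

lemma eq_of_vecMul_one_eq_of_forall_succAbove {m : Type*} {A B : Matrix (Fin (n + 1)) m R}
    (r : Fin (n + 1)) (h : 1 ᵥ* A = 1 ᵥ* B) (hrows : ∀ i, A (r.succAbove i) = B (r.succAbove i)) :
    A = B := by
  ext a b
  induction a using Fin.succAboveCases r with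
  | x =>
    have := congrFun h b
    simp only [vecMul, dotProduct, Pi.one_apply, one_mul, Fin.sum_univ_succAbove _ r] at this
    simpa [hrows] using this
  | p i => rw [hrows]

lemma apply_eq_of_mulVec_eq_zero [NoZeroDivisors R] {Y : Matrix (Fin (n + 1)) (Fin (n + 1)) R}
    (hrow : Y *ᵥ 1 = 0) {r : Fin (n + 1)} (hM : (Y.submatrix r.succAbove r.succAbove).det ≠ 0)
    {v : Fin (n + 1) → R} (hv : Y *ᵥ v = 0) (a b : Fin (n + 1)) : v a = v b := by
  set u := v - v r • 1
  have hYu : Y *ᵥ u = 0 := by simp [u, mulVec_sub, mulVec_smul, hv, hrow]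
  have hu : u r = 0 := by simp [u]
  have hu' : u ∘ r.succAbove = 0 := eq_zero_of_mulVec_eq_zero hM <| funext fun i => by
    rw [← mulVec_succAbove_of_apply_eq_zero Y hu, hYu, Pi.zero_apply, Pi.zero_apply]
  have hconst : ∀ a, v a = v r := fun a => by
    have : u a = 0 := Fin.succAboveCases r hu (fun i => congrFun hu' i) a
    simpa [u, sub_eq_zero] using this
  rw [hconst a, hconst b]

/-- The inverse of `Y` grounded at `r`, padded with a zero row and column at `r`. -/
noncomputable def groundedInv (Y : Matrix (Fin (n + 1)) (Fin (n + 1)) R) (r : Fin (n + 1)) :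
    Matrix (Fin (n + 1)) (Fin (n + 1)) R :=
  Fin.insertNth r 0 fun i => Fin.insertNth r 0 ((Y.submatrix r.succAbove r.succAbove)⁻¹ i)

section GroundedInv

variable (Y : Matrix (Fin (n + 1)) (Fin (n + 1)) R) (r : Fin (n + 1))

@[simp] lemma groundedInv_apply_self_left (b : Fin (n + 1)) : groundedInv Y r r b = 0 := by
  simp [groundedInv]

@[simp] lemma groundedInv_apply_self_right (a : Fin (n + 1)) : groundedInv Y r a r = 0 := by
  induction a using Fin.succAboveCases r <;> simp [groundedInv]

@[simp] lemma groundedInv_apply_succAbove (i q : Fin n) :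
    groundedInv Y r (r.succAbove i) (r.succAbove q) =
      (Y.submatrix r.succAbove r.succAbove)⁻¹ i q := by
  simp [groundedInv]

variable {Y r}

theorem mul_groundedInv (hcol : 1 ᵥ* Y = 0)
    (hM : IsUnit (Y.submatrix r.succAbove r.succAbove).det) :
    Y * groundedInv Y r = 1 - vecMulVec (Pi.single r 1) 1 := by
  refine eq_of_vecMul_one_eq_of_forall_succAbove r ?_ fun i => funext fun b => ?_
  · rw [← vecMul_vecMul, hcol, zero_vecMul]
    funext b
    simp [vecMul, dotProduct, one_apply, Pi.single_apply]
  rw [show (Y * groundedInv Y r) (r.succAbove i) b = _ from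
    mulVec_succAbove_of_apply_eq_zero Y (u := fun c => groundedInv Y r c b) (by simp) i]
  induction b using Fin.succAboveCases r with
  | x => simp [mulVec, dotProduct, Fin.succAbove_ne]
  | p s =>
    have := congrFun (congrFun (mul_nonsing_inv _ hM) i) s
    simpa [mulVec, dotProduct, mul_apply, one_apply] using this

end GroundedInv

/-- `(e_j - e_k)ᵀ G (e_j - e_k)`: the impedance between `j` and `k` when `G` is a generalized
inverse of the admittance matrix. -/
def drivingPointImpedance {ι : Type*} (G : Matrix ι ι R) (j k : ι) : R :=
  G j j + G k k - G j k - G k j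

@[simp] lemma drivingPointImpedance_groundedInv_self_left
    (Y : Matrix (Fin (n + 1)) (Fin (n + 1)) R) (j k : Fin (n + 1)) :
    drivingPointImpedance (groundedInv Y j) j k = groundedInv Y j k k := by
  simp [drivingPointImpedance]

theorem drivingPointImpedance_eq_of_mul_eq [NoZeroDivisors R]
    {Y : Matrix (Fin (n + 1)) (Fin (n + 1)) R} (hrow : Y *ᵥ 1 = 0) {r : Fin (n + 1)}
    (hM : (Y.submatrix r.succAbove r.succAbove).det ≠ 0)
    {G G' : Matrix (Fin (n + 1)) (Fin (n + 1)) R} {s s' : Fin (n + 1)}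
    (hG : Y * G = 1 - vecMulVec (Pi.single s 1) 1)
    (hG' : Y * G' = 1 - vecMulVec (Pi.single s' 1) 1) (j k : Fin (n + 1)) :
    drivingPointImpedance G j k = drivingPointImpedance G' j k := by
  set u := (G - G') *ᵥ (Pi.single k 1 - Pi.single j 1)
  have hYu : Y *ᵥ u = 0 := by
    rw [mulVec_mulVec, mul_sub, hG, hG', sub_sub_sub_cancel_left, sub_mulVec, vecMulVec_mulVec,
      vecMulVec_mulVec]
    simp
  have := apply_eq_of_mulVec_eq_zero hrow hM hYu k j
  simp [u, mulVec_sub, mulVec_single] at this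
  unfold drivingPointImpedance
  linear_combination this

end Matrix

theorem cof2_self_eq_cof1_mul_groundedInv {R : Type*} [CommRing R] {n : ℕ}
    (Y : Matrix (Fin (n + 2)) (Fin (n + 2)) R) {j k : Fin (n + 2)} (hjk : j ≠ k)
    (hY : IsUnit (cof1 Y j j)) :
    cof2 Y j k j k = cof1 Y j j * groundedInv Y j k k := by
  have hk := groundedInv_apply_succAbove Y j (delIdx j k) (delIdx j k)
  rw [succAbove_delIdx hjk] at hk
  rw [cof1_self] at hY ⊢
  rw [cof2_self_of_ne Y hjk, cof1_self, det_submatrix_succAbove_self_eq_mul_inv _ hY, hk]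

theorem Finset.sum_sum_ite_lt_add_swap {ι M : Type*} [Fintype ι] [LinearOrder ι]
    [AddCommMonoid M] (f : ι → ι → M) (hf : ∀ i, f i i = 0) :
    ∑ i, ∑ j, (if i < j then f i j + f j i else 0) = ∑ i, ∑ j, f i j := by
  have hsplit : ∀ i j, (if i < j then f i j else 0) + (if j < i then f i j else 0) = f i j := by
    intro i j
    rcases lt_trichotomy i j with h | rfl | h
    · simp [h, h.not_gt]
    · simp [hf]
    · simp [h, h.not_gt]
  calc ∑ i, ∑ j, (if i < j then f i j + f j i else 0)
      = ∑ i, ∑ j, (if i < j then f i j else 0) + ∑ i, ∑ j, (if i < j then f j i else 0) := by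
        simp only [ite_add_zero, Finset.sum_add_distrib]
    _ = ∑ i, ∑ j, (if i < j then f i j else 0) + ∑ i, ∑ j, (if j < i then f i j else 0) := by
        rw [Finset.sum_comm (f := fun i j => if i < j then f j i else 0)]
    _ = ∑ i, ∑ j, f i j := by simp only [← Finset.sum_add_distrib, hsplit]

section Laplacian

variable {m : ℕ} {y : Fin m → Fin m → ℝ}

lemma lap_transpose (hsym : ∀ a b, y a b = y b a) : (lap y)ᵀ = lap y := by
  ext a b
  by_cases h : a = b
  · subst h; rfl
  · simp [lap, h, Ne.symm h, hsym a b]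

lemma lap_apply_eq_sub (hdiag : ∀ a, y a a = 0) (a b : Fin m) :
    lap y a b = (if a = b then ∑ x, y a x else 0) - y a b := by
  by_cases h : a = b
  · subst h; simp [lap, hdiag]
  · simp [lap, h]

lemma lap_mulVec_one (hdiag : ∀ a, y a a = 0) : lap y *ᵥ 1 = 0 := by
  funext a
  simp [mulVec, dotProduct, lap_apply_eq_sub hdiag]

lemma trace_lap_mul (hsym : ∀ a b, y a b = y b a) (hdiag : ∀ a, y a a = 0)
    (G : Matrix (Fin m) (Fin m) ℝ) :
    (lap y * G).trace =
      ∑ j, ∑ k, if j < k then y j k * drivingPointImpedance G j k else 0 := by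
  have hrow : ∀ a, ∑ b, lap y a b * G b a = ∑ b, y a b * (G a a - G b a) := by
    intro a
    simp [lap_apply_eq_sub hdiag, sub_mul, mul_sub, Finset.sum_mul]
  have hpair : ∀ j k, y j k * drivingPointImpedance G j k
      = y j k * (G j j - G k j) + y k j * (G k k - G j k) := by
    intro j k
    rw [drivingPointImpedance, hsym k j]
    ring
  simp only [trace, diag, mul_apply, hrow, hpair]
  exact (Finset.sum_sum_ite_lt_add_swap _ fun j => by simp).symm

end Laplacian

theorem foster_mean_impedance_general {n : ℕ}
    (y : Fin (n + 2) → Fin (n + 2) → ℝ)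
    (hsym : ∀ a b, y a b = y b a) (hdiag : ∀ a, y a a = 0)
    (c : ℝ) (hc : ∀ a b, cof1 (lap y) a b = c) (hc0 : c ≠ 0) :
    (∑ j : Fin (n + 2), ∑ k : Fin (n + 2),
        if j < k then y j k * (cof2 (lap y) j k j k / c) else 0) = (n + 1 : ℝ) := by
  have hrow : lap y *ᵥ 1 = 0 := lap_mulVec_one hdiag
  have hcol : 1 ᵥ* lap y = 0 := by rw [← mulVec_transpose, lap_transpose hsym, hrow]
  have hminor : ∀ j : Fin (n + 2), ((lap y).submatrix j.succAbove j.succAbove).det ≠ 0 := by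
    intro j
    rw [← cof1_self, hc]; exact hc0
  have hG : ∀ j, lap y * groundedInv (lap y) j = 1 - vecMulVec (Pi.single j 1) 1 := fun j =>
    mul_groundedInv hcol (hminor j).isUnit
  have hZ : ∀ j k, j < k →
      cof2 (lap y) j k j k / c = drivingPointImpedance (groundedInv (lap y) 0) j k := by
    intro j k hjk
    rw [cof2_self_eq_cof1_mul_groundedInv _ hjk.ne (by rw [hc]; exact hc0.isUnit), hc,
      mul_div_cancel_left₀ _ hc0, ← drivingPointImpedance_groundedInv_self_left,
      drivingPointImpedance_eq_of_mul_eq hrow (hminor 0) (hG j) (hG 0)]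
  calc (∑ j : Fin (n + 2), ∑ k : Fin (n + 2),
        if j < k then y j k * (cof2 (lap y) j k j k / c) else 0)
      = (lap y * groundedInv (lap y) 0).trace := by
        rw [trace_lap_mul hsym hdiag]
        refine Finset.sum_congr rfl fun j _ => Finset.sum_congr rfl fun k _ => ?_
        split_ifs with hjk
        · rw [hZ j k hjk]
        · rfl
    _ = n + 1 := by
        rw [hG, trace_sub, trace_one, trace_vecMulVec, single_dotProduct, Fintype.card_fin]
        simp only [Pi.one_apply, mul_one]
        push_cast
        ring

/-- Foster's mean impedance theorem: in a connected network on `n` nodes with nonnegative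
real branch admittances `y_{jk}` and admittance matrix of rank `n - 1`, the sum over all
unordered node pairs of `y_{jk} · Z_{jk}` equals `n - 1`. -/
theorem foster_mean_impedance {n : ℕ}
    (y : Fin (n + 2) → Fin (n + 2) → ℝ)
    (hsym : ∀ a b, y a b = y b a) (hdiag : ∀ a, y a a = 0) (hnn : ∀ a b, 0 ≤ y a b)
    (hrank : (lap y).rank = n + 1)
    (c : ℝ) (hc : ∀ a b, cof1 (lap y) a b = c) (hc0 : c ≠ 0) :
    (∑ j : Fin (n + 2), ∑ k : Fin (n + 2),
        if j < k then y j k * (cof2 (lap y) j k j k / c) else 0) = (n + 1 : ℝ) :=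
  foster_mean_impedance_general y hsym hdiag c hc hc0
end

section
/- In a network expanded from node k by a new node ν with branch admittance y₊, every second cofactor of the expanded matrix of the form C_{kν,jν}(Y⁺) equals the common first cofactor c(Y) of the original matrix; consequently the effective impedance across the added branch equals 1/y₊. -/
/-- The admittance matrix of the network expanded by a new node `ν = n + 1` attached to the
existing node `k` through a branch of admittance `yp`. -/
def expandY {m : ℕ} (Y : Matrix (Fin (m + 1)) (Fin (m + 1)) ℝ) (k : Fin (m + 1)) (yp : ℝ) :
    Matrix (Fin (m + 2)) (Fin (m + 2)) ℝ :=
  fun i j =>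
    if hi : i.val < m + 1 then
      if hj : j.val < m + 1 then
        Y ⟨i.val, hi⟩ ⟨j.val, hj⟩ +
          (if (⟨i.val, hi⟩ : Fin (m + 1)) = k ∧ (⟨j.val, hj⟩ : Fin (m + 1)) = k then yp else 0)
      else if (⟨i.val, hi⟩ : Fin (m + 1)) = k then -yp else 0
    else
      if hj : j.val < m + 1 then
        (if (⟨j.val, hj⟩ : Fin (m + 1)) = k then -yp else 0)
      else yp

/-! Once row and column `ν` are deleted together with a row or column through `k`, no trace of
the new branch is left, so `C_{kν,jν}(Y⁺)` is the `(k, j)` cofactor of `Y`. For `c(Y⁺)`, adding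
row `ν` to row `k` and column `ν` to column `k` turns the `(0, 0)` minor of `Y⁺` into
`diag(Y', y₊)`; in block form this is the factorisation
`[[A + B D C, B D], [D C, D]] = [[1, B], [0, 1]] * diag(A, D) * [[1, 0], [C, 1]]`,
so `c(Y⁺) = y₊ c(Y)` and no invertibility of `y₊` is needed. -/

open Matrix Fin

theorem Matrix.det_fromBlocks_add_mul_mul {R m o : Type*} [CommRing R] [Fintype m] [DecidableEq m]
    [Fintype o] [DecidableEq o] (A : Matrix m m R) (B : Matrix m o R) (C : Matrix o m R)
    (D : Matrix o o R) :
    (fromBlocks (A + B * D * C) (B * D) (D * C) D).det = A.det * D.det := by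
  have hfactor : fromBlocks (A + B * D * C) (B * D) (D * C) D =
      fromBlocks 1 B 0 1 * fromBlocks A 0 0 D * fromBlocks 1 0 C 1 := by
    simp [fromBlocks_multiply, Matrix.mul_assoc]
  rw [hfactor, det_mul, det_mul, det_fromBlocks_zero₂₁, det_fromBlocks_zero₂₁,
    det_fromBlocks_zero₁₂]
  simp

theorem Matrix.det_eq_det_fromBlocks_last {R : Type*} [CommRing R] {n : ℕ}
    (M : Matrix (Fin (n + 1)) (Fin (n + 1)) R) :
    M.det = (fromBlocks (M.submatrix castSucc castSucc)
      (of fun i (_ : Fin 1) => M i.castSucc (last n)) (of fun _ j => M (last n) j.castSucc)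
      (of fun _ _ => M (last n) (last n))).det := by
  rw [← det_submatrix_equiv_self finSumFinEquiv.symm]
  congr 1
  ext i j
  induction i using Fin.lastCases <;> induction j using Fin.lastCases <;>
    simp [finSumFinEquiv_symm_last, finSumFinEquiv_symm_apply_castSucc]

section Expansion

variable {m : ℕ} (Y : Matrix (Fin (m + 1)) (Fin (m + 1)) ℝ) (k : Fin (m + 1)) (yp : ℝ)

@[simp]
theorem expandY_castSucc_castSucc (a b : Fin (m + 1)) :
    expandY Y k yp a.castSucc b.castSucc = Y a b + if a = k ∧ b = k then yp else 0 := by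
  simp [expandY, Fin.is_le]

@[simp]
theorem expandY_castSucc_last (a : Fin (m + 1)) :
    expandY Y k yp a.castSucc (last (m + 1)) = if a = k then -yp else 0 := by
  simp [expandY, Fin.is_le]

@[simp]
theorem expandY_last_castSucc (b : Fin (m + 1)) :
    expandY Y k yp (last (m + 1)) b.castSucc = if b = k then -yp else 0 := by
  simp [expandY, Fin.is_le]

@[simp]
theorem expandY_last_last : expandY Y k yp (last (m + 1)) (last (m + 1)) = yp := by
  simp [expandY]

theorem cof2_expandY_castSucc_last (p q : Fin (m + 1)) (h : p = k ∨ q = k) :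
    cof2 (expandY Y k yp) p.castSucc (last (m + 1)) q.castSucc (last (m + 1)) = cof1 Y p q := by
  have hdel : ∀ r : Fin (m + 1), delIdx r.castSucc (last (m + 1)) = last m := fun r =>
    Fin.ext (by simp [delIdx])
  have hminor : ((expandY Y k yp).submatrix p.castSucc.succAbove q.castSucc.succAbove).submatrix
      (last m).succAbove (last m).succAbove = Y.submatrix p.succAbove q.succAbove := by
    ext i j
    have hk : ¬(p.succAbove i = k ∧ q.succAbove j = k) := by
      rcases h with rfl | rfl
      · exact fun h => succAbove_ne _ _ h.1
      · exact fun h => succAbove_ne _ _ h.2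
    simp [hk]
  have hsign : (-1 : ℝ) ^ ((last m : ℕ) + last m) = 1 := Even.neg_one_pow ⟨m, rfl⟩
  rw [cof2, if_neg (by simp), hdel, hdel, cof1, hminor, hsign, one_mul, cof1]
  simp

theorem cof1_expandY_zero_zero : cof1 (expandY Y k yp) 0 0 = yp * cof1 Y 0 0 := by
  let u : Fin m → ℝ := fun i => if i.succ = k then 1 else 0
  let B : Matrix (Fin m) (Fin 1) ℝ := of fun i _ => -u i
  let C : Matrix (Fin 1) (Fin m) ℝ := of fun _ j => -u j
  let D : Matrix (Fin 1) (Fin 1) ℝ := of fun _ _ => yp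
  simp only [cof1, Fin.val_zero, add_zero, pow_zero, one_mul, succAbove_zero]
  calc ((expandY Y k yp).submatrix succ succ).det
      = (fromBlocks (Y.submatrix succ succ + B * D * C) (B * D) (D * C) D).det := by
        rw [det_eq_det_fromBlocks_last]
        congr 1
        congr 1 <;> ext i j <;>
          simp [B, C, D, u, Matrix.mul_apply, succ_castSucc, -castSucc_succ] <;>
          split_ifs <;> simp_all
    _ = yp * (Y.submatrix succ succ).det := by
        rw [det_fromBlocks_add_mul_mul, det_fin_one, mul_comm]
        rfl

end Expansion

theorem expand_second_cofactors_general {n : ℕ}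
    (Y : Matrix (Fin (n + 2)) (Fin (n + 2)) ℝ)
    (k : Fin (n + 2)) (yp : ℝ)
    (c : ℝ) (hc : ∀ a b, cof1 Y a b = c) (hc0 : c ≠ 0) :
    (∀ j : Fin (n + 2),
        cof2 (expandY (m := n + 1) Y k yp) k.castSucc (Fin.last (n + 2))
            j.castSucc (Fin.last (n + 2)) = c ∧
        cof2 (expandY (m := n + 1) Y k yp) j.castSucc (Fin.last (n + 2))
            k.castSucc (Fin.last (n + 2)) = c) ∧
      cof2 (expandY (m := n + 1) Y k yp) k.castSucc (Fin.last (n + 2))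
          k.castSucc (Fin.last (n + 2)) /
        cof1 (expandY (m := n + 1) Y k yp) 0 0 = 1 / yp := by
  refine ⟨fun j => ⟨?_, ?_⟩, ?_⟩
  · rw [cof2_expandY_castSucc_last Y k yp k j (Or.inl rfl), hc]
  · rw [cof2_expandY_castSucc_last Y k yp j k (Or.inr rfl), hc]
  · rw [cof2_expandY_castSucc_last Y k yp k k (Or.inl rfl), cof1_expandY_zero_zero, hc, hc,
      mul_comm, ← div_div, div_self hc0]

/-- In a network expanded from node `k` by a new node `ν` with branch admittance `yp ≠ 0`,
every second cofactor `C_{kν,jν}(Y⁺)` (and `C_{jν,kν}(Y⁺)`) equals the common first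
cofactor `c(Y)` of the original matrix; consequently the effective impedance across the
added branch is `Z_{kν} = C_{kν,kν}(Y⁺)/c(Y⁺) = 1/yp`. -/
theorem expand_second_cofactors {n : ℕ}
    (Y : Matrix (Fin (n + 2)) (Fin (n + 2)) ℝ)
    (hsym : ∀ a b, Y a b = Y b a)
    (hrow : ∀ a, ∑ b, Y a b = 0) (hcol : ∀ b, ∑ a, Y a b = 0)
    (k : Fin (n + 2)) (yp : ℝ) (hyp : yp ≠ 0)
    (c : ℝ) (hc : ∀ a b, cof1 Y a b = c) (hc0 : c ≠ 0) :
    (∀ j : Fin (n + 2),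
        cof2 (expandY (m := n + 1) Y k yp) k.castSucc (Fin.last (n + 2))
            j.castSucc (Fin.last (n + 2)) = c ∧
        cof2 (expandY (m := n + 1) Y k yp) j.castSucc (Fin.last (n + 2))
            k.castSucc (Fin.last (n + 2)) = c) ∧
      cof2 (expandY (m := n + 1) Y k yp) k.castSucc (Fin.last (n + 2))
          k.castSucc (Fin.last (n + 2)) /
        cof1 (expandY (m := n + 1) Y k yp) 0 0 = 1 / yp :=
  expand_second_cofactors_general Y k yp c hc hc0
end

section
/- (Sylvester-type cofactor identity) For any n×n matrix A, indices p, q, r, s and disjoint index tuples α (of rows avoiding p,q) and β (of columns avoiding r,s) of equal length, one has C_{pα,rβ}(A)·C_{qα,sβ}(A) − C_{pα,sβ}(A)·C_{qα,rβ}(A) = C_{pqα,rsβ}(A)·C_{α,β}(A), where C with empty index sets is det A and C with all indices is 1. -/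
open scoped Classical

/-- Given a tuple `f : Fin m → Fin N` of (intended distinct) indices, the function on
`Fin N` sending the first `m` positions to the listed indices (in order) and the remaining
positions to the complement of the tuple in increasing order. -/
noncomputable def tupFun {N m : ℕ} (f : Fin m → Fin N) : Fin N → Fin N :=
  fun i =>
    if hf : Function.Injective f then
      have hm : m ≤ N := by simpa using Fintype.card_le_of_injective f hf
      let s : Finset (Fin N) := Finset.univ \ Finset.image f Finset.univ
      have hs : s.card = N - m := by
        have h1 : (Finset.image f Finset.univ).card = m := by
          rw [Finset.card_image_of_injective _ hf]; simp
        have h2 := Finset.card_sdiff_of_subset (Finset.subset_univ (Finset.image f Finset.univ))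
        simpa [s, h1] using h2
      match finSumFinEquiv.symm (Fin.cast (by omega) i) with
      | Sum.inl a => f a
      | Sum.inr b => ((s.orderIsoOfFin hs) b : Fin N)
    else i

/-- The permutation of `Fin N` bringing the deleted indices of the tuple `f` to the front
(in the listed order) and the remaining indices after them in increasing order. -/
noncomputable def tupPerm {N m : ℕ} (f : Fin m → Fin N) : Equiv.Perm (Fin N) :=
  if hb : Function.Bijective (tupFun f) then Equiv.ofBijective _ hb else Equiv.refl _

/-- The generalized (signed) cofactor of `A` associated with deleting the rows listed in the
tuple `ρ` and the columns listed in the tuple `κ`: the determinant of the remaining minor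
(rows and columns of the complements, in increasing order), multiplied by the signs of the
permutations bringing the deleted rows, respectively columns, (in the listed order) into
principal position.  With empty tuples it is `det A`; with full tuples it is `±1`. -/
noncomputable def gcof {N m : ℕ} (A : Matrix (Fin N) (Fin N) ℝ)
    (ρ κ : Fin m → Fin N) : ℝ :=
  if hm : m ≤ N then
    ((Equiv.Perm.sign (tupPerm ρ) : ℤ) : ℝ) * ((Equiv.Perm.sign (tupPerm κ) : ℤ) : ℝ) *
      (A.submatrix
        (fun i : Fin (N - m) =>
          tupPerm ρ (Fin.cast (by omega) (finSumFinEquiv (Sum.inr i : Fin m ⊕ Fin (N - m)))))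
        (fun i : Fin (N - m) =>
          tupPerm κ (Fin.cast (by omega)
            (finSumFinEquiv (Sum.inr i : Fin m ⊕ Fin (N - m)))))).det
  else 0

/-!
Let `B` be `A` with column `β t` replaced by the unit vector `e_{α t}` for every `t`. Permuting
the rows and columns of `B` by the permutations whose signs enter `C_{α,β}(A)` makes it block
triangular, with an identity block and the complementary minor of `A` on the diagonal, so
`C_{α,β}(A) = det B`; and `C_{pα,rβ}(A) = det B[r←e_p]` replaces one more column. The theorem
thus becomes an identity valid for every square matrix `M` over a commutative ring:
`det M[r←x] * det M[s←y] - det M[s←x] * det M[r←y] = det M[r←x][s←y] * det M`.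
Multiplying `M` by the identity matrix with columns `r, s` replaced by `adj M x, adj M y` gives
`M[r←det M • x][s←det M • y]`, and the determinant of the second factor is the left-hand
side by Cramer's rule; this proves the identity times `det M`. The factor is cancelled for the
matrix `X • 1 + M` over `R[X]`, whose determinant is monic, and then `X = 0` is substituted.
-/

open Matrix Polynomial

namespace Matrix

variable {R : Type*} [CommRing R] {n : Type*} [DecidableEq n] [Fintype n]

theorem perm_eq_one_or_swap_of_prod_ne_zero {r s : n} (hrs : r ≠ s) (u v : n → R)
    {σ : Equiv.Perm n}
    (hσ : ∏ j, (((1 : Matrix n n R).updateCol r u).updateCol s v) (σ j) j ≠ 0) :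
    σ = 1 ∨ σ = Equiv.swap r s := by
  have hfix : ∀ j, j ≠ r → j ≠ s → σ j = j := fun j hjr hjs => by
    by_contra h
    exact hσ (Finset.prod_eq_zero (Finset.mem_univ j) (by simp [hjr, hjs, h]))
  have hmem : ∀ j, j = r ∨ j = s → σ j = r ∨ σ j = s := fun j hj => by
    by_contra! h
    have := σ.injective (hfix (σ j) h.1 h.2)
    rcases hj with rfl | rfl <;> tauto
  rcases hmem r (.inl rfl) with hr | hr <;> rcases hmem s (.inr rfl) with hs | hs
  · exact absurd (σ.injective (hr.trans hs.symm)) hrs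
  · left
    ext j
    by_cases hjr : j = r; · simp [hjr, hr]
    by_cases hjs : j = s; · simp [hjs, hs]
    simp [hfix j hjr hjs]
  · right
    ext j
    by_cases hjr : j = r; · simp [hjr, hr, Equiv.swap_apply_left]
    by_cases hjs : j = s; · simp [hjs, hs]
    simp [hfix j hjr hjs, Equiv.swap_apply_of_ne_of_ne hjr hjs]
  · exact absurd (σ.injective (hr.trans hs.symm)) hrs

theorem det_one_updateCol_updateCol {r s : n} (hrs : r ≠ s) (u v : n → R) :
    (((1 : Matrix n n R).updateCol r u).updateCol s v).det = u r * v s - u s * v r := by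
  have hswap : (1 : Equiv.Perm n) ≠ Equiv.swap r s :=
    fun h => hrs (Equiv.swap_eq_one_iff.mp h.symm)
  rw [det_apply', Fintype.sum_eq_add 1 (Equiv.swap r s) hswap fun σ hσ => ?_]
  · rw [Fintype.prod_eq_mul r s hrs fun j hj => ?_, Fintype.prod_eq_mul r s hrs fun j hj => ?_]
    · simp [hrs, Equiv.Perm.sign_swap hrs, sub_eq_add_neg]
    · simp [hj.1, hj.2, Equiv.swap_apply_of_ne_of_ne hj.1 hj.2]
    · simp [hj.1, hj.2]
  · by_contra h
    rcases perm_eq_one_or_swap_of_prod_ne_zero hrs u v (right_ne_zero_of_mul h) with h1 | h1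
    exacts [hσ.1 h1, hσ.2 h1]

theorem det_mul_det_updateCol_mul_det_updateCol_sub (M : Matrix n n R) {r s : n} (hrs : r ≠ s)
    (x y : n → R) :
    M.det * ((M.updateCol r x).det * (M.updateCol s y).det
        - (M.updateCol s x).det * (M.updateCol r y).det)
      = M.det * (((M.updateCol r x).updateCol s y).det * M.det) := by
  set E := ((1 : Matrix n n R).updateCol r (adjugate M *ᵥ x)).updateCol s (adjugate M *ᵥ y)
  have hME : M * E = (M.updateCol r (M.det • x)).updateCol s (M.det • y) := by
    simp only [E, mul_updateCol, Matrix.mul_one, mulVec_mulVec, mul_adjugate, smul_mulVec,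
      one_mulVec]
  have hE : E.det = (M.updateCol r x).det * (M.updateCol s y).det
      - (M.updateCol s x).det * (M.updateCol r y).det := by
    simp only [E, det_one_updateCol_updateCol hrs, ← cramer_eq_adjugate_mulVec, cramer_apply]
  calc _ = (M * E).det := by rw [det_mul, hE]
    _ = _ := by
      rw [hME, det_updateCol_smul, updateCol_comm _ hrs, det_updateCol_smul,
        updateCol_comm _ hrs.symm]
      ring

theorem det_updateCol_mul_det_updateCol_sub (M : Matrix n n R) {r s : n} (hrs : r ≠ s)
    (x y : n → R) :
    (M.updateCol r x).det * (M.updateCol s y).det - (M.updateCol s x).det * (M.updateCol r y).det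
      = ((M.updateCol r x).updateCol s y).det * M.det := by
  let g : Matrix n n R[X] := (X : R[X]) • 1 + M.map C
  have hg : IsRegular g.det := Monic.isRegular (leadingCoeff_det_X_one_add_C M)
  have hgen := hg.left (det_mul_det_updateCol_mul_det_updateCol_sub g hrs (C ∘ x) (C ∘ y))
  have hgM : g.map (evalRingHom 0) = M := by ext; simp [g]
  have hC : ∀ z : n → R, evalRingHom 0 ∘ C ∘ z = z := fun z => by ext; simp
  simpa only [map_sub, map_mul, RingHom.map_det, RingHom.mapMatrix_apply, map_updateCol, hgM,
    hC] using congrArg (evalRingHom 0) hgen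

theorem det_eq_det_submatrix_inr_of_apply_inl {m k : Type*} [Fintype m] [DecidableEq m]
    [Fintype k] [DecidableEq k] (M : Matrix (m ⊕ k) (m ⊕ k) R)
    (h : ∀ i t, M i (.inl t) = (Pi.single (.inl t) 1 : m ⊕ k → R) i) :
    M.det = (M.submatrix .inr .inr).det := by
  have hM : M = fromBlocks 1 M.toBlocks₁₂ 0 (M.submatrix .inr .inr) := by
    ext (i | i) (j | j) <;> simp [h, one_apply, toBlocks₁₂, Pi.single_apply]
  conv_lhs => rw [hM]
  rw [det_fromBlocks_zero₂₁, det_one, one_mul]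

end Matrix

section TuplePerm

variable {N m : ℕ}

def finSumSubEquiv (h : m ≤ N) : Fin m ⊕ Fin (N - m) ≃ Fin N :=
  finSumFinEquiv.trans (finCongr (Nat.add_sub_cancel' h))

variable {f : Fin m → Fin N} (hf : Function.Injective f)
include hf

theorem card_univ_sdiff_image_of_injective :
    (Finset.univ \ Finset.image f Finset.univ).card = N - m := by
  rw [Finset.card_univ_sdiff, Finset.card_image_of_injective _ hf]
  simp

theorem tupFun_finSumSubEquiv_inl (h : m ≤ N) (t : Fin m) :
    tupFun f (finSumSubEquiv h (.inl t)) = f t := by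
  simp [tupFun, hf, finSumSubEquiv]

theorem tupFun_finSumSubEquiv_inr (h : m ≤ N) (b : Fin (N - m)) :
    tupFun f (finSumSubEquiv h (.inr b))
      = (Finset.univ \ Finset.image f Finset.univ).orderIsoOfFin
          (card_univ_sdiff_image_of_injective hf) b := by
  simp [tupFun, hf, finSumSubEquiv]

theorem tupFun_surjective : Function.Surjective (tupFun f) := by
  intro z
  by_cases hz : z ∈ Set.range f
  · obtain ⟨t, rfl⟩ := hz
    exact ⟨_, tupFun_finSumSubEquiv_inl hf (Fin.le_of_injective f hf) t⟩
  · have hz' : z ∈ Finset.univ \ Finset.image f Finset.univ := by simpa using hz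
    refine ⟨finSumSubEquiv (Fin.le_of_injective f hf)
      (.inr (((Finset.univ \ Finset.image f Finset.univ).orderIsoOfFin
        (card_univ_sdiff_image_of_injective hf)).symm ⟨z, hz'⟩)), ?_⟩
    simp [tupFun_finSumSubEquiv_inr hf]

theorem tupPerm_apply (x : Fin N) : tupPerm f x = tupFun f x := by
  rw [tupPerm, dif_pos (Finite.surjective_iff_bijective.mp (tupFun_surjective hf))]
  rfl

theorem tupPerm_finSumSubEquiv_inl (h : m ≤ N) (t : Fin m) :
    tupPerm f (finSumSubEquiv h (.inl t)) = f t := by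
  rw [tupPerm_apply hf, tupFun_finSumSubEquiv_inl hf h]

theorem tupPerm_finSumSubEquiv_inr_notMem (h : m ≤ N) (b : Fin (N - m)) :
    tupPerm f (finSumSubEquiv h (.inr b)) ∉ Set.range f := by
  rw [tupPerm_apply hf, tupFun_finSumSubEquiv_inr hf h]
  rintro ⟨t, ht⟩
  have hmem := ((Finset.univ \ Finset.image f Finset.univ).orderIsoOfFin
    (card_univ_sdiff_image_of_injective hf) b).2
  rw [← ht] at hmem
  simp at hmem

end TuplePerm

section ReplaceCols

variable {R : Type*} [Zero R] [One R] {n : Type*} [DecidableEq n]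

def replaceCols (A : Matrix n n R) : {m : ℕ} → (Fin m → n) → (Fin m → n) → Matrix n n R
  | 0, _, _ => A
  | _ + 1, ρ, κ =>
    (replaceCols A (Fin.tail ρ) (Fin.tail κ)).updateCol (κ 0) (Pi.single (ρ 0) 1)

theorem replaceCols_cons {m : ℕ} (A : Matrix n n R) (ρ κ : Fin m → n) (p r : n) :
    replaceCols A (Fin.cons p ρ) (Fin.cons r κ)
      = (replaceCols A ρ κ).updateCol r (Pi.single p 1) :=
  rfl

theorem replaceCols_apply_of_notMem {m : ℕ} (A : Matrix n n R) (ρ : Fin m → n)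
    {κ : Fin m → n} {j : n} (hj : j ∉ Set.range κ) (i : n) :
    replaceCols A ρ κ i j = A i j := by
  induction m with
  | zero => rfl
  | succ m ih =>
    rw [← Fin.cons_self_tail κ, Fin.range_cons, Set.mem_insert_iff, not_or] at hj
    rw [replaceCols, updateCol_ne hj.1, ih _ hj.2]

theorem replaceCols_apply_self {m : ℕ} (A : Matrix n n R) (ρ : Fin m → n) {κ : Fin m → n}
    (hκ : Function.Injective κ) (i : n) (t : Fin m) :
    replaceCols A ρ κ i (κ t) = (Pi.single (ρ t) 1 : n → R) i := by
  induction m with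
  | zero => exact t.elim0
  | succ m ih =>
    rw [← Fin.cons_self_tail κ, Fin.cons_injective_iff] at hκ
    cases t using Fin.cases with
    | zero => rw [replaceCols, updateCol_self]
    | succ u =>
      have hu : κ u.succ ≠ κ 0 := fun h => hκ.1 ⟨u, h⟩
      rw [replaceCols, updateCol_ne hu]
      exact ih _ hκ.2 u

end ReplaceCols

theorem gcof_eq_det_replaceCols {N m : ℕ} (A : Matrix (Fin N) (Fin N) ℝ)
    {ρ κ : Fin m → Fin N} (hρ : Function.Injective ρ) (hκ : Function.Injective κ) :
    gcof A ρ κ = (replaceCols A ρ κ).det := by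
  have hm : m ≤ N := Fin.le_of_injective ρ hρ
  let e := finSumSubEquiv hm
  let M := (replaceCols A ρ κ).submatrix (tupPerm ρ ∘ e) (tupPerm κ ∘ e)
  have hunit : ∀ i t, M i (.inl t) = (Pi.single (.inl t) 1 : _ → ℝ) i := by
    intro i t
    simp only [M, e, submatrix_apply, Function.comp_apply, tupPerm_finSumSubEquiv_inl hκ hm,
      replaceCols_apply_self _ _ hκ, ← tupPerm_finSumSubEquiv_inl hρ hm t]
    simp [Pi.single_apply]
  have hcompl : M.submatrix .inr .inr
      = A.submatrix (tupPerm ρ ∘ e ∘ .inr) (tupPerm κ ∘ e ∘ .inr) := by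
    ext i j
    exact replaceCols_apply_of_notMem _ _ (tupPerm_finSumSubEquiv_inr_notMem hκ hm j) _
  have hM : M.det = (Equiv.Perm.sign (tupPerm ρ) * Equiv.Perm.sign (tupPerm κ) : ℝ)
      * (replaceCols A ρ κ).det := by
    change ((((replaceCols A ρ κ).submatrix id (tupPerm κ)).submatrix (tupPerm ρ) id).submatrix
      e e).det = _
    rw [det_submatrix_equiv_self, det_permute, det_permute', mul_assoc]
  have hsq : (Equiv.Perm.sign (tupPerm ρ) * Equiv.Perm.sign (tupPerm κ) : ℝ)
      * (Equiv.Perm.sign (tupPerm ρ) * Equiv.Perm.sign (tupPerm κ) : ℝ) = 1 := by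
    rw [mul_mul_mul_comm, ← Int.cast_mul, ← Int.cast_mul, Int.units_coe_mul_self,
      Int.units_coe_mul_self, Int.cast_one, one_mul]
  rw [gcof, dif_pos hm]
  -- the index maps in `gcof` are `finSumSubEquiv` unfolded
  change _ * (A.submatrix (tupPerm ρ ∘ e ∘ .inr) (tupPerm κ ∘ e ∘ .inr)).det = _
  rw [← hcompl, ← det_eq_det_submatrix_inr_of_apply_inl M hunit, hM, ← mul_assoc, hsq,
    one_mul]

/-- Sylvester-type identity for cofactors: for any `n × n` matrix `A`, indices `p ≠ q`,
`r ≠ s`, and equal-length tuples `α` of rows avoiding `p, q` and `β` of columns avoiding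
`r, s`, one has
`C_{pα,rβ}·C_{qα,sβ} − C_{pα,sβ}·C_{qα,rβ} = C_{pqα,rsβ}·C_{α,β}`. -/
theorem sylvester_cofactor_identity {N m : ℕ} (A : Matrix (Fin N) (Fin N) ℝ)
    (p q r s : Fin N) (α β : Fin m → Fin N)
    (hα : Function.Injective α) (hβ : Function.Injective β)
    (hp : p ∉ Set.range α) (hq : q ∉ Set.range α)
    (hr : r ∉ Set.range β) (hs : s ∉ Set.range β)
    (hpq : p ≠ q) (hrs : r ≠ s) :
    gcof A (Fin.cons p α) (Fin.cons r β) * gcof A (Fin.cons q α) (Fin.cons s β)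
      - gcof A (Fin.cons p α) (Fin.cons s β) * gcof A (Fin.cons q α) (Fin.cons r β)
      = gcof A (Fin.cons p (Fin.cons q α)) (Fin.cons r (Fin.cons s β)) * gcof A α β := by
  have hpα := Fin.cons_injective_iff.mpr ⟨hp, hα⟩
  have hqα := Fin.cons_injective_iff.mpr ⟨hq, hα⟩
  have hrβ := Fin.cons_injective_iff.mpr ⟨hr, hβ⟩
  have hsβ := Fin.cons_injective_iff.mpr ⟨hs, hβ⟩
  have hpqα : Function.Injective (Fin.cons p (Fin.cons q α) : Fin (m + 2) → Fin N) :=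
    Fin.cons_injective_iff.mpr ⟨by simp [Fin.range_cons, hpq, hp], hqα⟩
  have hrsβ : Function.Injective (Fin.cons r (Fin.cons s β) : Fin (m + 2) → Fin N) :=
    Fin.cons_injective_iff.mpr ⟨by simp [Fin.range_cons, hrs, hr], hsβ⟩
  rw [gcof_eq_det_replaceCols A hpα hrβ, gcof_eq_det_replaceCols A hqα hsβ,
    gcof_eq_det_replaceCols A hpα hsβ, gcof_eq_det_replaceCols A hqα hrβ,
    gcof_eq_det_replaceCols A hpqα hrsβ, gcof_eq_det_replaceCols A hα hβ]
  simp only [replaceCols_cons]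
  rw [updateCol_comm _ hrs.symm]
  exact det_updateCol_mul_det_updateCol_sub _ hrs _ _
end

section
/- Contracting two nodes j and k of a network yields an admittance matrix Y⁻ whose common first cofactor equals the principal second cofactor of the original matrix: c(Y⁻) = C_{jk,jk}(Y). -/
/-- The admittance matrix of the network contracted on nodes `j` and `k`: add row `k` to
row `j`, add column `k` to column `j`, then delete row and column `k`. -/
def contractY {n : ℕ} (Y : Matrix (Fin (n + 2)) (Fin (n + 2)) ℝ) (j k : Fin (n + 2)) :
    Matrix (Fin (n + 1)) (Fin (n + 1)) ℝ :=
  let Ya : Matrix (Fin (n + 2)) (Fin (n + 2)) ℝ :=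
    fun a b => if a = j then Y j b + Y k b else Y a b
  let Yb : Matrix (Fin (n + 2)) (Fin (n + 2)) ℝ :=
    fun a b => if b = j then Ya a j + Ya a k else Ya a b
  Yb.submatrix k.succAbove k.succAbove

/-!
The contracted matrix again has vanishing row sums (by direct computation) and vanishing column
sums (contraction commutes with transposition), so its adjugate is constant: the difference of
two entries in a column is the determinant of a matrix whose rows sum to zero. Evaluating the
cofactor at the merged node `j` deletes exactly the modified row and column of `Y⁻`, which leaves
`Y` with rows and columns `j` and `k` removed, with every sign of the form `(-1) ^ (m + m)`.
-/

open Matrix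

namespace Matrix

variable {ι R : Type*} [Fintype ι] [DecidableEq ι] [CommRing R]

theorem det_eq_zero_of_sum_row_eq_zero [Nonempty ι] {M : Matrix ι ι R}
    (h : ∀ i, ∑ j, M i j = 0) : M.det = 0 :=
  det_eq_zero_of_mulVec_eq_zero_of_mem_nonZeroDivisors (v := 1) (i := Classical.arbitrary ι)
    (funext fun i => by simpa [mulVec, dotProduct] using h i) (one_mem _)

theorem adjugate_apply_eq_of_sum_row_eq_zero {M : Matrix ι ι R}
    (h : ∀ i, ∑ j, M i j = 0) (i i' j : ι) : adjugate M i j = adjugate M i' j := by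
  have : Nonempty ι := ⟨j⟩
  have hdiff : (M.updateRow j (Pi.single i 1 - Pi.single i' 1)).det = 0 := by
    refine det_eq_zero_of_sum_row_eq_zero fun r => ?_
    rcases eq_or_ne r j with rfl | hr
    · simp [Finset.sum_sub_distrib]
    · simpa [updateRow_ne hr] using h r
  have hsplit := det_updateRow_add M j (Pi.single i 1 - Pi.single i' 1) (Pi.single i' 1)
  rw [sub_add_cancel, hdiff, zero_add] at hsplit
  rw [adjugate_apply, adjugate_apply, hsplit]

theorem adjugate_apply_eq_of_sum_eq_zero {M : Matrix ι ι R}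
    (hrow : ∀ i, ∑ j, M i j = 0) (hcol : ∀ j, ∑ i, M i j = 0) (i j i' j' : ι) :
    adjugate M i j = adjugate M i' j' := by
  have hcolT : ∀ i, ∑ j, Mᵀ i j = 0 := hcol
  calc adjugate M i j = adjugate M i' j := adjugate_apply_eq_of_sum_row_eq_zero hrow i i' j
    _ = adjugate Mᵀ j i' := by rw [← adjugate_transpose, transpose_apply]
    _ = adjugate Mᵀ j' i' := adjugate_apply_eq_of_sum_row_eq_zero hcolT j j' i'
    _ = adjugate M i' j' := by rw [← adjugate_transpose, transpose_apply]

end Matrix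

theorem cof1_eq_adjugate_apply_s11 {n : ℕ} {F : Type*} [CommRing F]
    (M : Matrix (Fin (n + 1)) (Fin (n + 1)) F) (p q : Fin (n + 1)) : cof1 M p q = adjugate M q p :=
  (adjugate_fin_succ_eq_det_submatrix M q p).symm

section contractY

variable {n : ℕ} (Y : Matrix (Fin (n + 2)) (Fin (n + 2)) ℝ) {j k : Fin (n + 2)}

theorem contractY_apply (a b : Fin (n + 1)) :
    contractY Y j k a b =
      let u := k.succAbove a
      let v := k.succAbove b
      if v = j then
        (if u = j then Y j j + Y k j else Y u j) + (if u = j then Y j k + Y k k else Y u k)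
      else if u = j then Y j v + Y k v else Y u v :=
  rfl

theorem contractY_transpose : (contractY Y j k)ᵀ = contractY Yᵀ j k := by
  ext a b
  simp only [transpose_apply, contractY_apply]
  split_ifs <;> ring

theorem contractY_apply_of_ne {a b : Fin (n + 1)} (ha : k.succAbove a ≠ j)
    (hb : k.succAbove b ≠ j) :
    contractY Y j k a b = Y (k.succAbove a) (k.succAbove b) := by
  simp [contractY_apply, ha, hb]

theorem sum_contractY_apply_eq_zero (hrow : ∀ a, ∑ b, Y a b = 0) (hjk : j ≠ k)
    (p : Fin (n + 1)) :
    ∑ q, contractY Y j k p q = 0 := by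
  let row : Fin (n + 2) → ℝ := fun c =>
    if k.succAbove p = j then Y j c + Y k c else Y (k.succAbove p) c
  have hsum_row : ∑ c, row c = 0 := by
    by_cases hp : k.succAbove p = j <;> simp [row, hp, Finset.sum_add_distrib, hrow]
  have hentry : ∀ q, contractY Y j k p q =
      row (k.succAbove q) + if k.succAbove q = j then row k else 0 := by
    intro q
    simp only [contractY_apply, row]
    split_ifs <;> simp_all
  calc ∑ q, contractY Y j k p q
      = ∑ q, (row (k.succAbove q) + if k.succAbove q = j then row k else 0) :=
        Finset.sum_congr rfl fun q _ => hentry q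
    _ = ∑ c, (row c + if c = j then row k else 0) - row k := by
        rw [Fin.sum_univ_succAbove _ k]; simp [hjk.symm]
    _ = 0 := by simp [Finset.sum_add_distrib, hsum_row]

end contractY

theorem Fin.val_succAbove {m : ℕ} (k : Fin (m + 1)) (x : Fin m) :
    (k.succAbove x : ℕ) = if (x : ℕ) < k then (x : ℕ) else (x : ℕ) + 1 := by
  rw [Fin.succAbove]
  split_ifs <;> simp_all [Fin.lt_def]

section delIdx

variable {n : ℕ} {j k : Fin (n + 2)}

theorem succAbove_delIdx_s11 (hjk : j ≠ k) : k.succAbove (delIdx k j) = j := by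
  have := Fin.val_ne_of_ne hjk
  ext
  simp only [Fin.val_succAbove, delIdx]
  split_ifs <;> omega

theorem succAbove_succAbove_delIdx (hjk : j ≠ k) (m : Fin n) :
    j.succAbove ((delIdx j k).succAbove m) = k.succAbove ((delIdx k j).succAbove m) := by
  have := Fin.val_ne_of_ne hjk
  ext
  simp only [Fin.val_succAbove, delIdx]
  split_ifs <;> omega

theorem submatrix_contractY_delIdx (Y : Matrix (Fin (n + 2)) (Fin (n + 2)) ℝ) (hjk : j ≠ k) :
    (contractY Y j k).submatrix (delIdx k j).succAbove (delIdx k j).succAbove =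
      (Y.submatrix j.succAbove j.succAbove).submatrix
        (delIdx j k).succAbove (delIdx j k).succAbove := by
  have hne : ∀ m, k.succAbove ((delIdx k j).succAbove m) ≠ j := fun m h =>
    Fin.succAbove_ne _ m (Fin.succAbove_right_injective (h.trans (succAbove_delIdx_s11 hjk).symm))
  ext a b
  simp only [submatrix_apply, contractY_apply_of_ne Y (hne a) (hne b),
    succAbove_succAbove_delIdx hjk]

end delIdx

theorem contract_first_cofactor_general {n : ℕ}
    (Y : Matrix (Fin (n + 2)) (Fin (n + 2)) ℝ)
    (hrow : ∀ a, ∑ b, Y a b = 0) (hcol : ∀ b, ∑ a, Y a b = 0)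
    (j k : Fin (n + 2)) (hjk : j ≠ k) :
    ∀ p q : Fin (n + 1), cof1 (contractY Y j k) p q = cof2 Y j k j k := by
  intro p q
  have hrow' := sum_contractY_apply_eq_zero Y hrow hjk
  have hcol' : ∀ q, ∑ p, contractY Y j k p q = 0 := by
    simpa [← contractY_transpose] using sum_contractY_apply_eq_zero Yᵀ hcol hjk
  have hsign : ∀ m : ℕ, (-1 : ℝ) ^ (m + m) = 1 := fun m => Even.neg_one_pow ⟨m, rfl⟩
  rw [cof1_eq_adjugate_apply_s11,
    adjugate_apply_eq_of_sum_eq_zero hrow' hcol' q p (delIdx k j) (delIdx k j),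
    ← cof1_eq_adjugate_apply_s11, cof2, if_neg (by simp [hjk]), cof1, cof1,
    submatrix_contractY_delIdx Y hjk, submatrix_submatrix, hsign, hsign, hsign, one_mul, one_mul]

/-- Contracting two nodes `j ≠ k` of a network yields an admittance matrix whose first
cofactors all equal the principal second cofactor `C_{jk,jk}(Y)` of the original matrix. -/
theorem contract_first_cofactor {n : ℕ}
    (Y : Matrix (Fin (n + 2)) (Fin (n + 2)) ℝ)
    (hsym : ∀ a b, Y a b = Y b a)
    (hrow : ∀ a, ∑ b, Y a b = 0) (hcol : ∀ b, ∑ a, Y a b = 0)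
    (j k : Fin (n + 2)) (hjk : j ≠ k) :
    ∀ p q : Fin (n + 1), cof1 (contractY Y j k) p q = cof2 Y j k j k :=
  contract_first_cofactor_general Y hrow hcol j k hjk
end
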